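/- Let α be a 1-form and β a nowhere-vanishing 1-form on ℂ^{2k} satisfying (dα)^k = k(dα)^{k-1} ∧ α ∧ β. Define ω = dz + α + zβ on ℂ^{2k+1} (with β independent of z). Then the function H defined by ω ∧ (dω)^k = H dz ∧ dx¹ ∧ ⋯ ∧ dx^{2k} vanishes identically on {z = 0}. -/

import Mathlib

/-- Partial derivative in the `j`-th coordinate direction on `ℂᴺ`.  Coordinate `0`
is `z` and coordinates `1, …, 2k` are `x¹, …, x^{2k}`. -/
noncomputable def pd {N : ℕ} (j : Fin N) (F : (Fin N → ℂ) → ℂ) (p : Fin N → ℂ) : ℂ :=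
  fderiv ℂ F p (Pi.single j 1)

/-- The generator `dx^i` (with `dx^0 = dz`) in the exterior algebra of `ℂᴺ`. -/
noncomputable def gen {N : ℕ} (i : Fin N) : ExteriorAlgebra ℂ (Fin N → ℂ) :=
  ExteriorAlgebra.ι ℂ (Pi.single i 1)

/-- The value at `p` of the 1-form with component functions `w`. -/
noncomputable def oneForm {N : ℕ} (w : (Fin N → ℂ) → Fin N → ℂ) (p : Fin N → ℂ) :
    ExteriorAlgebra ℂ (Fin N → ℂ) :=
  ∑ i, w p i • gen i

/-- The value at `p` of the exterior derivative of the 1-form with components `w`: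
`dω = ∑_{j,i} ∂_j w_i dx^j ∧ dx^i`. -/
noncomputable def dOneForm {N : ℕ} (w : (Fin N → ℂ) → Fin N → ℂ) (p : Fin N → ℂ) :
    ExteriorAlgebra ℂ (Fin N → ℂ) :=
  ∑ j, ∑ i, pd j (fun q => w q i) p • (gen j * gen i)

/-- The volume form `dz ∧ dx¹ ∧ ⋯ ∧ dx^{2k}` in the exterior algebra. -/
noncomputable def vol (N : ℕ) : ExteriorAlgebra ℂ (Fin N → ℂ) :=
  (List.ofFn (fun i : Fin N => gen i)).prod


/-! On `{z = 0}` the term `z dβ` of `dω` drops out, so there `ω = dz + α` and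
`dω = dα + dz ∧ β`. Since `dz ∧ β` commutes with `dα` and squares to zero,
`(dω)^k = (dα)^k + k (dα)^{k-1} ∧ dz ∧ β`, which the realizability condition turns into
`k (dα)^{k-1} ∧ ω ∧ β`; hence `ω ∧ (dω)^k` contains the factor `ω ∧ ω = 0`. -/

theorem Commute.add_pow_of_mul_self_eq_zero {R : Type*} [Semiring R] {A B : R}
    (h : Commute A B) (hB : B * B = 0) {k : ℕ} (hk : 1 ≤ k) :
    (A + B) ^ k = A ^ k + k • (A ^ (k - 1) * B) := by
  induction k, hk using Nat.le_induction with
  | base => simp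
  | succ k hk ih =>
    rw [pow_succ, ih, add_mul, mul_add, mul_add, smul_mul_assoc, smul_mul_assoc,
      mul_assoc, mul_assoc, hB, mul_zero, smul_zero, add_zero,
      ← h.eq, ← mul_assoc, ← pow_succ, ← pow_succ, Nat.sub_add_cancel hk,
      Nat.add_sub_cancel, succ_nsmul]
    abel

theorem Differentiable.finCons_const {𝕜 E : Type*} [NontriviallyNormedField 𝕜]
    [NormedAddCommGroup E] [NormedSpace 𝕜 E] {n : ℕ} {f : E → Fin n → 𝕜}
    (hf : Differentiable 𝕜 f) (c : 𝕜) :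
    Differentiable 𝕜 fun q => (Fin.cons c (f q) : Fin (n + 1) → 𝕜) :=
  differentiable_pi.2 fun i =>
    Fin.cases (by simp) (fun i => by simpa using differentiable_pi.1 hf i) i

namespace ExteriorAlgebra

variable {R M : Type*} [CommRing R] [AddCommGroup M] [Module R M]

theorem ιMulti_basis_ne_zero [Nontrivial R] {n : ℕ} (b : Module.Basis (Fin n) R M) :
    ιMulti R n b ≠ 0 := by
  intro h
  have := congrArg (liftAlternating (R := R) (Function.update 0 n b.det)) h
  rw [liftAlternating_apply_ιMulti, map_zero, Function.update_self, b.det_self] at this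
  exact one_ne_zero this

theorem ι_mul_ι_commute_ι (u v w : M) : Commute (ι R u * ι R v) (ι R w) := by
  have swap : ∀ x y : M, ι R x * ι R y = -(ι R y * ι R x) :=
    fun x y => eq_neg_of_add_eq_zero_left (ι_add_mul_swap x y)
  rw [Commute, SemiconjBy, mul_assoc, swap v w, mul_neg, ← mul_assoc, swap u w, neg_mul, neg_neg,
    mul_assoc]

theorem ι_mul_ι_mul_self (u v : M) : (ι R u * ι R v) * (ι R u * ι R v) = 0 := by
  rw [← mul_assoc, (ι_mul_ι_commute_ι u v u).eq, ← mul_assoc (ι R u) (ι R u), ι_sq_zero,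
    zero_mul, zero_mul]

theorem ι_add_mul_add_ι_mul_ι_pow_eq_zero {D : ExteriorAlgebra R M}
    (hD : ∀ m, Commute D (ι R m)) (e a b : M) {k : ℕ} (hk : 1 ≤ k)
    (hDk : D ^ k = (k : R) • (D ^ (k - 1) * ι R a * ι R b)) :
    ι R (e + a) * (D + ι R e * ι R b) ^ k = 0 := by
  have hDe : Commute D (ι R e * ι R b) := (hD e).mul_right (hD b)
  calc ι R (e + a) * (D + ι R e * ι R b) ^ k
      = ι R (e + a) * ((k : R) • (D ^ (k - 1) * ι R (e + a) * ι R b)) := by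
        rw [hDe.add_pow_of_mul_self_eq_zero (ι_mul_ι_mul_self e b) hk, hDk,
          ← Nat.cast_smul_eq_nsmul R, ← smul_add, map_add]
        simp only [mul_assoc, ← mul_add, ← add_mul, add_comm (ι R a)]
    _ = (k : R) • (D ^ (k - 1) * (ι R (e + a) * ι R (e + a)) * ι R b) := by
        rw [mul_smul_comm, ← mul_assoc, ← mul_assoc, ← ((hD _).pow_left _).eq, mul_assoc (D ^ _)]
    _ = 0 := by rw [ι_sq_zero, mul_zero, zero_mul, smul_zero]

end ExteriorAlgebra

open ExteriorAlgebra

section Forms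

variable {N : ℕ}

theorem vol_ne_zero : vol N ≠ 0 := by
  have hvol : vol N = ιMulti ℂ N (Pi.basisFun ℂ (Fin N)) := by
    rw [ιMulti_apply]; simp [vol, gen]
  rw [hvol]
  exact ιMulti_basis_ne_zero _

theorem oneForm_eq_ι (w : (Fin N → ℂ) → Fin N → ℂ) (p : Fin N → ℂ) :
    oneForm w p = ι ℂ (w p) := by
  simp only [oneForm, gen, ← map_smul, ← map_sum, ← Pi.single_smul, smul_eq_mul, mul_one,
    Finset.univ_sum_single]

theorem commute_dOneForm_ι (w : (Fin N → ℂ) → Fin N → ℂ) (p v : Fin N → ℂ) :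
    Commute (dOneForm w p) (ι ℂ v) :=
  Commute.sum_left _ _ _ fun _ _ => Commute.sum_left _ _ _ fun _ _ =>
    (ι_mul_ι_commute_ι _ _ _).smul_left _

theorem pd_coord (i j : Fin N) (p : Fin N → ℂ) :
    pd j (fun q => q i) p = (Pi.single j 1 : Fin N → ℂ) i := by
  have : (fun q : Fin N → ℂ => q i) = ContinuousLinearMap.proj (R := ℂ) i := rfl
  rw [pd, this, ContinuousLinearMap.fderiv, ContinuousLinearMap.proj_apply]

theorem dOneForm_const (c p : Fin N → ℂ) : dOneForm (fun _ => c) p = 0 := by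
  simp [dOneForm, pd]

theorem dOneForm_add {u v : (Fin N → ℂ) → Fin N → ℂ} (hu : Differentiable ℂ u)
    (hv : Differentiable ℂ v) (p : Fin N → ℂ) :
    dOneForm (u + v) p = dOneForm u p + dOneForm v p := by
  simp only [dOneForm, ← Finset.sum_add_distrib, ← add_smul]
  refine Finset.sum_congr rfl fun j _ => Finset.sum_congr rfl fun i _ => ?_
  simp only [pd, Pi.add_apply]
  rw [fderiv_fun_add (differentiable_pi.1 hu i p) (differentiable_pi.1 hv i p),
    add_apply]

theorem dOneForm_coord_smul (i₀ : Fin N) {v : (Fin N → ℂ) → Fin N → ℂ} (hv : Differentiable ℂ v)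
    (p : Fin N → ℂ) :
    dOneForm (fun q => q i₀ • v q) p = p i₀ • dOneForm v p + gen i₀ * oneForm v p := by
  have hpd : ∀ j i, pd j (fun q => (q i₀ • v q) i) p
      = p i₀ * pd j (fun q => v q i) p + (Pi.single j 1 : Fin N → ℂ) i₀ * v p i := by
    intro j i
    simp only [Pi.smul_apply, smul_eq_mul]
    rw [← pd_coord, pd, pd, pd, fderiv_fun_mul (differentiableAt_apply i₀ p)
      (differentiable_pi.1 hv i p), add_apply]
    simp only [smul_apply, smul_eq_mul]
    ring
  simp only [dOneForm, oneForm, hpd, add_smul, Finset.sum_add_distrib, Finset.smul_sum,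
    Finset.mul_sum, mul_smul, Pi.single_apply, ite_smul, one_smul, zero_smul]
  rw [Finset.sum_eq_single_of_mem i₀ (Finset.mem_univ _)
    fun j _ hj => Finset.sum_eq_zero fun i _ => if_neg hj.symm]
  simp only [↓reduceIte, mul_smul_comm]

end Forms

theorem degeneracy_on_zero_section_general {k : ℕ} (hk : 1 ≤ k)
    (a b : (Fin (2 * k + 1) → ℂ) → Fin (2 * k) → ℂ)
    (ha : Differentiable ℂ a) (hb : Differentiable ℂ b)
    (wa wb w : (Fin (2 * k + 1) → ℂ) → Fin (2 * k + 1) → ℂ)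
    (hwa : ∀ p, wa p = Fin.cons 0 (fun i : Fin (2 * k) => a p i))
    (hwb : ∀ p, wb p = Fin.cons 0 (fun i : Fin (2 * k) => b p i))
    (hw : ∀ p, w p = Fin.cons 1 (fun i : Fin (2 * k) => a p i + p 0 * b p i))
    (hreal : ∀ p, (dOneForm wa p) ^ k =
      (k : ℂ) • ((dOneForm wa p) ^ (k - 1) * oneForm wa p * oneForm wb p))
    (H : (Fin (2 * k + 1) → ℂ) → ℂ)
    (hωH : ∀ p, oneForm w p * (dOneForm w p) ^ k = H p • vol (2 * k + 1)) :
    ∀ x : Fin (2 * k) → ℂ, H (Fin.cons 0 x) = 0 := by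
  intro x
  set p : Fin (2 * k + 1) → ℂ := Fin.cons 0 x
  have hp0 : p 0 = 0 := Fin.cons_zero _ _
  have hwa_diff : Differentiable ℂ wa := funext hwa ▸ ha.finCons_const 0
  have hwb_diff : Differentiable ℂ wb := funext hwb ▸ hb.finCons_const 0
  have hzwb_diff : Differentiable ℂ fun q => q 0 • wb q := (differentiable_apply 0).smul hwb_diff
  have hw_split : w = (fun _ => Pi.single 0 1) + wa + fun q => q 0 • wb q := by
    funext q i
    simp only [Pi.add_apply, hw, hwa, hwb]
    refine Fin.cases ?_ (fun i => ?_) i <;> simp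
  have hω : oneForm w p = ι ℂ (Pi.single 0 1 + wa p) := by
    simp [oneForm_eq_ι, hw_split, hp0]
  have hdω : dOneForm w p = dOneForm wa p + gen 0 * oneForm wb p := by
    rw [hw_split, dOneForm_add ((differentiable_const _).add hwa_diff) hzwb_diff,
      dOneForm_add (differentiable_const _) hwa_diff, dOneForm_const,
      dOneForm_coord_smul 0 hwb_diff, hp0, zero_smul, zero_add, zero_add]
  have hH : H p • vol (2 * k + 1) = 0 := by
    rw [← hωH, hω, hdω, oneForm_eq_ι wb]
    refine ι_add_mul_add_ι_mul_ι_pow_eq_zero (commute_dOneForm_ι wa p) _ _ _ hk ?_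
    simpa only [oneForm_eq_ι] using hreal p
  exact (smul_eq_zero.mp hH).resolve_right vol_ne_zero

/-- Let `α = ∑ aᵢ(x)dxⁱ` and `β = ∑ bᵢ(x)dxⁱ` be 1-forms on `ℂ^{2k}` (viewed on
`ℂ^{2k+1}`, independent of `z`), with `β` nowhere vanishing, satisfying the
realizability condition `(dα)^k = k (dα)^{k-1} ∧ α ∧ β`.  Set `ω = dz + α + zβ` and
define `H` by `ω ∧ (dω)^k = H dz∧dx¹∧⋯∧dx^{2k}`.  Then `H` vanishes identically on
`{z = 0}`: the hyperplane `{z = 0}` consists of noncontact points of `ω`. -/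
theorem degeneracy_on_zero_section {k : ℕ} (hk : 1 ≤ k)
    (a b : (Fin (2 * k + 1) → ℂ) → Fin (2 * k) → ℂ)
    (ha : Differentiable ℂ a) (hb : Differentiable ℂ b)
    (haz : ∀ p, a p = a (Function.update p 0 0))
    (hbz : ∀ p, b p = b (Function.update p 0 0))
    (hbnv : ∀ p, ∃ i, b p i ≠ 0)
    (wa wb w : (Fin (2 * k + 1) → ℂ) → Fin (2 * k + 1) → ℂ)
    (hwa : ∀ p, wa p = Fin.cons 0 (fun i : Fin (2 * k) => a p i))
    (hwb : ∀ p, wb p = Fin.cons 0 (fun i : Fin (2 * k) => b p i))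
    (hw : ∀ p, w p = Fin.cons 1 (fun i : Fin (2 * k) => a p i + p 0 * b p i))
    (hreal : ∀ p, (dOneForm wa p) ^ k =
      (k : ℂ) • ((dOneForm wa p) ^ (k - 1) * oneForm wa p * oneForm wb p))
    (H : (Fin (2 * k + 1) → ℂ) → ℂ)
    (hωH : ∀ p, oneForm w p * (dOneForm w p) ^ k = H p • vol (2 * k + 1)) :
    ∀ x : Fin (2 * k) → ℂ, H (Fin.cons 0 x) = 0 :=
  degeneracy_on_zero_section_general hk a b ha hb wa wb w hwa hwb hw hreal H hωH
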